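/- Let W be an N×N weight matrix on ℝ satisfying W(x) = W(−x) for almost every x, with monic orthogonal polynomials {H_n}_{n≥0}, and let U(y) = y^{1/2} W(√y) be the associated weight matrix on (0,∞) with monic orthogonal polynomials {F_n}_{n≥0}. Let h_n denote the monic scalar orthogonal polynomials for the weight e^{−x²} on ℝ and ℓ_n^{(1/2)} the monic scalar orthogonal polynomials for the weight y^{1/2}e^{−y} on (0,∞). Suppose there exist a differential operator 𝒱 = Σ_{j=0}^s (d^j/dx^j) F_j(x) with N×N matrix polynomial coefficients and invertible N×N matrices A_n such that (h_n I)·𝒱 = A_n H_n for all n ≥ 0. Then there exists a differential operator ℰ̃ with N×N matrix polynomial coefficients in y such that (ℓ_n^{(1/2)} I)·ℰ̃ = A_{2n+1} F_n for all n ≥ 0; in particular, U is a Darboux transformation of the diagonal Laguerre weight y^{1/2}e^{−y} I. -/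

import Mathlib

open MeasureTheory Polynomial Set Matrix
open scoped ComplexOrder

noncomputable section

/-- Matrix polynomials: `N × N` matrices with entries in `ℂ[X]`. -/
abbrev MatPoly (N : ℕ) := Matrix (Fin N) (Fin N) (Polynomial ℂ)

/-- Evaluation of a matrix polynomial at a real point. -/
def evalM {N : ℕ} (P : MatPoly N) (x : ℝ) : Matrix (Fin N) (Fin N) ℂ :=
  fun i j => (P i j).eval (x : ℂ)

/-- The `k`-th matrix coefficient of a matrix polynomial. -/
def coeffM {N : ℕ} (P : MatPoly N) (k : ℕ) : Matrix (Fin N) (Fin N) ℂ :=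
  fun i j => (P i j).coeff k

/-- Entrywise derivative of a matrix polynomial. -/
def derivM {N : ℕ} (P : MatPoly N) : MatPoly N :=
  fun i j => Polynomial.derivative (P i j)

/-- Entrywise iterated derivative. -/
def iterDerivM {N : ℕ} (k : ℕ) (P : MatPoly N) : MatPoly N :=
  fun i j => (fun q => Polynomial.derivative q)^[k] (P i j)

/-- Constant matrix polynomial. -/
def constM {N : ℕ} (A : Matrix (Fin N) (Fin N) ℂ) : MatPoly N :=
  A.map Polynomial.C

/-- Entrywise multiplication by the scalar polynomial `X`. -/
def XmulM {N : ℕ} (P : MatPoly N) : MatPoly N :=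
  fun i j => Polynomial.X * P i j

/-- Composition with the polynomial `X ^ 2` (the substitution `x ↦ x²`). -/
def compSqM {N : ℕ} (P : MatPoly N) : MatPoly N :=
  fun i j => (P i j).comp (Polynomial.X ^ 2)

/-- Composition with `-X` (the substitution `x ↦ -x`). -/
def reflectM {N : ℕ} (P : MatPoly N) : MatPoly N :=
  fun i j => (P i j).comp (-Polynomial.X)

/-- Right action of the matrix differential operator `D = ∑_{j=0}^s (d^j/dx^j) F j`
on a matrix polynomial: `(P · D)(x) = ∑_{j=0}^s P^{(j)}(x) F_j(x)`. -/
def applyOp {N : ℕ} (s : ℕ) (F : ℕ → MatPoly N) (P : MatPoly N) : MatPoly N :=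
  ∑ j ∈ Finset.range (s + 1), iterDerivM j P * F j

/-- Entrywise integral of a matrix-valued function over a set. -/
def matInt {N : ℕ} (I : Set ℝ) (f : ℝ → Matrix (Fin N) (Fin N) ℂ) :
    Matrix (Fin N) (Fin N) ℂ :=
  fun i j => ∫ x in I, f x i j

/-- The matrix inner product `⟨P, Q⟩_W = ∫_I P(x) W(x) Q(x)^* dx`. -/
def innerW {N : ℕ} (I : Set ℝ) (W : ℝ → Matrix (Fin N) (Fin N) ℂ)
    (P Q : MatPoly N) : Matrix (Fin N) (Fin N) ℂ :=
  matInt I (fun x => evalM P x * W x * (evalM Q x)ᴴ)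

/-- `W` is a weight matrix on the set `I ⊆ ℝ`: integrable on `I`, positive definite
almost everywhere on `I`, and with all moments finite. -/
structure IsWeight {N : ℕ} (I : Set ℝ) (W : ℝ → Matrix (Fin N) (Fin N) ℂ) : Prop where
  integrable : ∀ i j, IntegrableOn (fun x => W x i j) I
  posdef : ∀ᵐ x ∂(volume.restrict I), (W x).PosDef
  moments : ∀ (n : ℕ) (i j), IntegrableOn (fun (x : ℝ) => (x : ℂ) ^ n * W x i j) I

/-- `P` is monic of degree exactly `n` (leading coefficient the identity matrix). -/
def IsMonicDeg {N : ℕ} (P : MatPoly N) (n : ℕ) : Prop :=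
  coeffM P n = 1 ∧ ∀ k, n < k → coeffM P k = 0

/-- `P` is the sequence of monic orthogonal polynomials of the weight `W` on `I`. -/
def MonicOPS {N : ℕ} (I : Set ℝ) (W : ℝ → Matrix (Fin N) (Fin N) ℂ)
    (P : ℕ → MatPoly N) : Prop :=
  (∀ n, IsMonicDeg (P n) n) ∧ ∀ n m, n ≠ m → innerW I W (P n) (P m) = 0

/-- A (not necessarily monic) sequence of orthogonal polynomials for `W` on `I`:
degree `n` with invertible leading coefficient, pairwise orthogonal. -/
def IsOPS {N : ℕ} (I : Set ℝ) (W : ℝ → Matrix (Fin N) (Fin N) ℂ)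
    (Q : ℕ → MatPoly N) : Prop :=
  (∀ n, IsUnit (coeffM (Q n) n) ∧ ∀ k, n < k → coeffM (Q n) k = 0) ∧
  ∀ n m, n ≠ m → innerW I W (Q n) (Q m) = 0

/-- The Laguerre-type weight `V(y) = y^{-1/2} W(√y)` on `(0,∞)`. -/
def VWeight {N : ℕ} (W : ℝ → Matrix (Fin N) (Fin N) ℂ) :
    ℝ → Matrix (Fin N) (Fin N) ℂ :=
  fun y => (Real.sqrt y)⁻¹ • W (Real.sqrt y)

/-- The Laguerre-type weight `U(y) = y^{1/2} W(√y)` on `(0,∞)`. -/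
def UWeight {N : ℕ} (W : ℝ → Matrix (Fin N) (Fin N) ℂ) :
    ℝ → Matrix (Fin N) (Fin N) ℂ :=
  fun y => Real.sqrt y • W (Real.sqrt y)

/-- `p` is the sequence of monic scalar orthogonal polynomials of the scalar
weight `w` on `I`. -/
def ScalarMonicOPS (I : Set ℝ) (w : ℝ → ℝ) (p : ℕ → Polynomial ℝ) : Prop :=
  (∀ n, (p n).Monic ∧ (p n).natDegree = n) ∧
  ∀ n m, n ≠ m → ∫ x in I, (p n).eval x * (p m).eval x * w x = 0


/-!
For an even weight `W`, the odd monic orthogonal polynomials are `H_{2n+1}(x) = x F_n(x²)`: the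
right-hand side is monic of degree `2n+1`, it is orthogonal to every `R(x²)` because the integrand
is odd, and to every `x R(x²)` with `deg R < n` because the substitution `y = x²` turns that inner
product into `⟨F_n, R⟩_U`. Viewing the Hermite weight as a `1 × 1` weight, the same argument gives
`h_{2n+1}(x) = x ℓ_n(x²)`.

Each derivative of `x p(x²)` is `x (T p)(x²)` or `(T p)(x²)` for a differential operator `T` in
`p`. Hence the odd part `o` of `f(x) = e(x²) + x o(x²)`, applied to `(h_{2n+1} I)·𝒱`, equals
`(ℓ_n I)·ℰ̃` for one differential operator `ℰ̃` independent of `n`, while applied to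
`A_{2n+1} H_{2n+1}` it gives `A_{2n+1} F_n`.
-/

section OddPart

variable {R : Type*} [CommRing R]

/-- Writing `f(x) = e(x²) + x·o(x²)`, the even part is `contract 2 f = e` and this is `o`. -/
def oddPart (f : R[X]) : R[X] := contract 2 (divX f)

lemma coeff_oddPart (f : R[X]) (k : ℕ) : (oddPart f).coeff k = f.coeff (2 * k + 1) := by
  rw [oddPart, coeff_contract two_ne_zero, coeff_divX, mul_comm]

lemma coeff_X_mul_expand_two (g : R[X]) (k : ℕ) :
    (X * expand R 2 g).coeff k = if Odd k then g.coeff (k / 2) else 0 := by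
  rcases k with _ | k
  · simp
  · rw [coeff_X_mul, coeff_expand two_pos]
    simp only [Nat.odd_add_one, Nat.not_odd_iff_even, even_iff_two_dvd]
    split_ifs
    · congr 1
      omega
    · rfl

lemma expand_contract_add_X_mul_expand_oddPart (f : R[X]) :
    expand R 2 (contract 2 f) + X * expand R 2 (oddPart f) = f := by
  ext k
  rw [coeff_add, coeff_X_mul_expand_two, coeff_expand two_pos]
  rcases Nat.even_or_odd' k with ⟨t, rfl | rfl⟩
  · simp [coeff_contract two_ne_zero, mul_comm]
  · simp [coeff_oddPart, Nat.mul_add_div]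

lemma oddPart_expand_add_X_mul_expand (e o : R[X]) :
    oddPart (expand R 2 e + X * expand R 2 o) = o := by
  ext k
  rw [coeff_oddPart, coeff_add, coeff_X_mul_expand_two, coeff_expand two_pos]
  simp [Nat.mul_add_div]

lemma oddPart_X_mul_expand (o : R[X]) : oddPart (X * expand R 2 o) = o := by
  simpa using oddPart_expand_add_X_mul_expand 0 o

lemma oddPart_sum {ι : Type*} (s : Finset ι) (f : ι → R[X]) :
    oddPart (∑ i ∈ s, f i) = ∑ i ∈ s, oddPart (f i) := by
  ext k
  simp only [coeff_oddPart, finsetSum_coeff]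

lemma oddPart_expand_mul (g f : R[X]) : oddPart (expand R 2 g * f) = g * oddPart f := by
  conv_lhs => rw [← expand_contract_add_X_mul_expand_oddPart f]
  rw [mul_add, ← map_mul, mul_left_comm, ← map_mul, oddPart_expand_add_X_mul_expand]

lemma oddPart_X_mul_expand_mul (g f : R[X]) :
    oddPart (X * expand R 2 g * f) = g * contract 2 f := by
  conv_lhs => rw [← expand_contract_add_X_mul_expand_oddPart f]
  have hX : (X : R[X]) * X = expand R 2 X := by rw [expand_X, sq]
  rw [show X * expand R 2 g * (expand R 2 (contract 2 f) + X * expand R 2 (oddPart f))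
      = expand R 2 (X * g * oddPart f) + X * expand R 2 (g * contract 2 f) by
    simp only [map_mul, ← hX]; ring, oddPart_expand_add_X_mul_expand]

end OddPart

section DiffOp

variable {R : Type*} [CommRing R]

def IsDiffOpLE (T : R[X] → R[X]) (s : ℕ) : Prop :=
  ∃ c : ℕ → R[X], ∀ p, T p = ∑ k ∈ Finset.range (s + 1), derivative^[k] p * c k

namespace IsDiffOpLE

lemma id : IsDiffOpLE (fun p : R[X] => p) 0 := ⟨fun _ => 1, fun p => by simp⟩

lemma mono {T : R[X] → R[X]} {s t : ℕ} (hT : IsDiffOpLE T s) (hst : s ≤ t) :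
    IsDiffOpLE T t := by
  obtain ⟨c, hc⟩ := hT
  refine ⟨fun k => if k ≤ s then c k else 0, fun p => ?_⟩
  rw [hc, ← Finset.sum_range_add_sum_Ico _ (Nat.succ_le_succ hst),
    Finset.sum_eq_zero (s := Finset.Ico _ _) fun k hk => by
      simp [Nat.not_le.mpr (Finset.mem_Ico.mp hk).1], add_zero]
  exact Finset.sum_congr rfl fun k hk => by
    simp [Nat.lt_succ_iff.mp (Finset.mem_range.mp hk)]

lemma add {T T' : R[X] → R[X]} {s : ℕ} (hT : IsDiffOpLE T s) (hT' : IsDiffOpLE T' s) :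
    IsDiffOpLE (fun p => T p + T' p) s := by
  obtain ⟨c, hc⟩ := hT
  obtain ⟨c', hc'⟩ := hT'
  exact ⟨c + c', fun p => by simp only [hc, hc', Pi.add_apply, mul_add, Finset.sum_add_distrib]⟩

lemma sum {ι : Type*} (S : Finset ι) {T : ι → R[X] → R[X]} {s : ℕ}
    (hT : ∀ i ∈ S, IsDiffOpLE (T i) s) : IsDiffOpLE (fun p => ∑ i ∈ S, T i p) s := by
  classical
  induction S using Finset.induction_on with
  | empty => exact ⟨0, fun p => by simp⟩
  | insert i S hi ih =>
    simp only [Finset.sum_insert hi]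
    exact (hT i (Finset.mem_insert_self i S)).add
      (ih fun j hj => hT j (Finset.mem_insert_of_mem hj))

lemma mul_const {T : R[X] → R[X]} {s : ℕ} (hT : IsDiffOpLE T s) (q : R[X]) :
    IsDiffOpLE (fun p => T p * q) s := by
  obtain ⟨c, hc⟩ := hT
  exact ⟨fun k => c k * q, fun p => by simp only [hc, Finset.sum_mul, mul_assoc]⟩

lemma derivative {T : R[X] → R[X]} {s : ℕ} (hT : IsDiffOpLE T s) :
    IsDiffOpLE (fun p => Polynomial.derivative (T p)) (s + 1) := by
  obtain ⟨c, hc⟩ := hT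
  have hshift : IsDiffOpLE (fun p => ∑ k ∈ Finset.range (s + 1),
      Polynomial.derivative^[k + 1] p * c k) (s + 1) :=
    ⟨fun k => Nat.casesOn k 0 c, fun p => by simp [Finset.sum_range_succ' _ (s + 1)]⟩
  have hcoeff : IsDiffOpLE (fun p => ∑ k ∈ Finset.range (s + 1),
      Polynomial.derivative^[k] p * Polynomial.derivative (c k)) s :=
    ⟨fun k => Polynomial.derivative (c k), fun p => rfl⟩
  convert hshift.add (hcoeff.mono s.le_succ) using 2 with p
  simp only [hc, derivative_sum, derivative_mul, Finset.sum_add_distrib,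
    Function.iterate_succ_apply']

end IsDiffOpLE

lemma exists_iterate_derivative_X_mul_expand (j : ℕ) :
    ∃ T : R[X] → R[X], IsDiffOpLE T j ∧ ∀ p, derivative^[j] (X * expand R 2 p) =
      if Even j then X * expand R 2 (T p) else expand R 2 (T p) := by
  induction j with
  | zero => exact ⟨fun p => p, IsDiffOpLE.id, fun p => by simp⟩
  | succ j ih =>
    obtain ⟨T, hT, hTp⟩ := ih
    have hder : ∀ q : R[X], derivative (expand R 2 q) = X * expand R 2 (derivative q * 2) := by
      intro q
      rw [derivative_expand, map_mul, map_ofNat]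
      ring
    by_cases hj : Even j
    · refine ⟨fun p => T p + derivative (T p) * 2 * X,
        (hT.mono j.le_succ).add ((hT.derivative.mul_const 2).mul_const X), fun p => ?_⟩
      rw [Function.iterate_succ_apply', hTp, if_pos hj,
        if_neg (Nat.not_even_iff_odd.mpr hj.add_one), derivative_mul, derivative_X, hder]
      simp only [map_add, map_mul, expand_X]
      ring
    · refine ⟨fun p => derivative (T p) * 2, hT.derivative.mul_const 2, fun p => ?_⟩
      rw [Function.iterate_succ_apply', hTp, if_neg hj,
        if_pos (Nat.not_even_iff_odd.mp hj).add_one, hder]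

lemma isDiffOpLE_oddPart_iterate_derivative_X_mul_expand_mul (j : ℕ) (f : R[X]) :
    IsDiffOpLE (fun p => oddPart (derivative^[j] (X * expand R 2 p) * f)) j := by
  obtain ⟨T, hT, hTp⟩ := exists_iterate_derivative_X_mul_expand (R := R) j
  by_cases hj : Even j
  · simpa only [hTp, if_pos hj, oddPart_X_mul_expand_mul] using hT.mul_const (contract 2 f)
  · simpa only [hTp, if_neg hj, oddPart_expand_mul] using hT.mul_const (oddPart f)

end DiffOp

section MatrixOddPart

variable {N : ℕ}

lemma compSqM_apply (P : MatPoly N) (i j : Fin N) : compSqM P i j = expand ℂ 2 (P i j) := rfl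

lemma map_oddPart_XmulM_compSqM (P : MatPoly N) : (XmulM (compSqM P)).map oddPart = P := by
  ext i j : 1
  exact oddPart_X_mul_expand (P i j)

lemma map_oddPart_constM_mul (A : Matrix (Fin N) (Fin N) ℂ) (P : MatPoly N) :
    (constM A * P).map oddPart = constM A * P.map oddPart := by
  ext i j : 1
  simp only [Matrix.map_apply, Matrix.mul_apply, constM, oddPart_sum]
  exact Finset.sum_congr rfl fun a _ => by rw [← oddPart_expand_mul, expand_C]

lemma compSqM_map_contract_add_XmulM_compSqM_map_oddPart (P : MatPoly N) :
    compSqM (P.map (contract 2)) + XmulM (compSqM (P.map oddPart)) = P := by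
  ext i j : 1
  exact expand_contract_add_X_mul_expand_oddPart (P i j)

lemma applyOp_smul_one (s : ℕ) (F : ℕ → MatPoly N) (p : ℂ[X]) :
    applyOp s F (p • 1) = ∑ j ∈ Finset.range (s + 1), derivative^[j] p • F j := by
  refine Finset.sum_congr rfl fun j _ => ?_
  have : iterDerivM j (p • 1 : MatPoly N) = derivative^[j] p • 1 := by
    ext a b : 1
    by_cases hab : a = b <;> simp [iterDerivM, hab]
  rw [this, smul_mul_assoc, one_mul]

lemma exists_map_oddPart_applyOp_X_mul_expand (s : ℕ) (F : ℕ → MatPoly N) :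
    ∃ G : ℕ → MatPoly N, ∀ p : ℂ[X],
      (applyOp s F ((X * expand ℂ 2 p) • 1)).map oddPart = applyOp s G (p • 1) := by
  have hentry (i l : Fin N) : IsDiffOpLE (fun p => ∑ j ∈ Finset.range (s + 1),
      oddPart (derivative^[j] (X * expand ℂ 2 p) * F j i l)) s :=
    IsDiffOpLE.sum _ fun j hj =>
      (isDiffOpLE_oddPart_iterate_derivative_X_mul_expand_mul j _).mono
        (Nat.lt_succ_iff.mp (Finset.mem_range.mp hj))
  choose c hc using hentry
  refine ⟨fun k => Matrix.of fun i l => c i l k, fun p => ?_⟩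
  rw [applyOp_smul_one, applyOp_smul_one]
  ext i l : 1
  simp only [Matrix.map_apply, Matrix.sum_apply, Matrix.smul_apply, smul_eq_mul, oddPart_sum,
    Matrix.of_apply]
  exact hc i l p

end MatrixOddPart

section InnerProduct

variable {N : ℕ}

lemma evalM_eq_mapMatrix (P : MatPoly N) (x : ℝ) :
    evalM P x = (Polynomial.evalRingHom (x : ℂ)).mapMatrix P := rfl

@[simp] lemma evalM_zero (x : ℝ) : evalM (0 : MatPoly N) x = 0 := by
  simp [evalM_eq_mapMatrix]

@[simp] lemma evalM_add (P Q : MatPoly N) (x : ℝ) : evalM (P + Q) x = evalM P x + evalM Q x :=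
  map_add (Polynomial.evalRingHom (x : ℂ)).mapMatrix P Q

@[simp] lemma evalM_sub (P Q : MatPoly N) (x : ℝ) : evalM (P - Q) x = evalM P x - evalM Q x :=
  map_sub (Polynomial.evalRingHom (x : ℂ)).mapMatrix P Q

@[simp] lemma evalM_mul (P Q : MatPoly N) (x : ℝ) : evalM (P * Q) x = evalM P x * evalM Q x :=
  map_mul (Polynomial.evalRingHom (x : ℂ)).mapMatrix P Q

@[simp] lemma evalM_constM (C : Matrix (Fin N) (Fin N) ℂ) (x : ℝ) : evalM (constM C) x = C := by
  ext i j
  simp [evalM, constM]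

@[simp] lemma evalM_smul_one (p : ℂ[X]) (x : ℝ) :
    evalM (p • (1 : MatPoly N)) x = p.eval (x : ℂ) • 1 := by
  ext i j
  by_cases hij : i = j <;> simp [evalM, hij]

@[simp] lemma evalM_XmulM (P : MatPoly N) (x : ℝ) : evalM (XmulM P) x = x • evalM P x := by
  ext i j
  simp [evalM, XmulM, Complex.real_smul]

@[simp] lemma evalM_compSqM (P : MatPoly N) (x : ℝ) : evalM (compSqM P) x = evalM P (x ^ 2) := by
  ext i j
  simp [evalM, compSqM]

lemma star_eval_ofReal (q : ℂ[X]) (x : ℝ) :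
    star (q.eval (x : ℂ)) = (q.map (starRingEnd ℂ)).eval (x : ℂ) := by
  induction q using Polynomial.induction_on' with
  | add p q hp hq => simp [hp, hq]
  | monomial n a => simp

def HasFiniteMoments (I : Set ℝ) (g : ℝ → Matrix (Fin N) (Fin N) ℂ) : Prop :=
  ∀ (n : ℕ) (i j : Fin N), IntegrableOn (fun x : ℝ => (x : ℂ) ^ n * g x i j) I

lemma IsWeight.hasFiniteMoments {I : Set ℝ} {W : ℝ → Matrix (Fin N) (Fin N) ℂ}
    (hW : IsWeight I W) : HasFiniteMoments I W :=
  hW.moments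

namespace HasFiniteMoments

variable {I : Set ℝ} {g : ℝ → Matrix (Fin N) (Fin N) ℂ}

lemma integrableOn_apply (hg : HasFiniteMoments I g) (i j : Fin N) :
    IntegrableOn (fun x => g x i j) I := by
  simpa using hg 0 i j

lemma integrableOn_eval_mul (hg : HasFiniteMoments I g) (q : ℂ[X]) (i j : Fin N) :
    IntegrableOn (fun x : ℝ => q.eval (x : ℂ) * g x i j) I := by
  simp_rw [eval_eq_sum_range, Finset.sum_mul, mul_assoc]
  exact integrable_finsetSum _ fun k _ => (hg k i j).const_mul _

lemma evalM_mul (hg : HasFiniteMoments I g) (P : MatPoly N) :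
    HasFiniteMoments I (fun x => evalM P x * g x) := by
  intro n i j
  simp_rw [Matrix.mul_apply, Finset.mul_sum, evalM, ← mul_assoc]
  refine integrable_finsetSum _ fun a _ => ?_
  exact (hg.integrableOn_eval_mul (X ^ n * P i a) a j).congr
    (Filter.Eventually.of_forall fun x => by simp only [eval_mul, eval_pow, eval_X])

lemma mul_conjTranspose_evalM (hg : HasFiniteMoments I g) (Q : MatPoly N) :
    HasFiniteMoments I (fun x => g x * (evalM Q x)ᴴ) := by
  intro n i j
  simp_rw [Matrix.mul_apply, Finset.mul_sum, Matrix.conjTranspose_apply, evalM, star_eval_ofReal]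
  refine integrable_finsetSum _ fun b _ => ?_
  exact (hg.integrableOn_eval_mul (X ^ n * (Q j b).map (starRingEnd ℂ)) i b).congr
    (Filter.Eventually.of_forall fun x => by simp only [eval_mul, eval_pow, eval_X]; ring)

end HasFiniteMoments

section MatInt

variable {I : Set ℝ} {f g : ℝ → Matrix (Fin N) (Fin N) ℂ}

lemma matInt_add (hf : HasFiniteMoments I f) (hg : HasFiniteMoments I g) :
    matInt I (fun x => f x + g x) = matInt I f + matInt I g := by
  ext i j
  exact integral_add (hf.integrableOn_apply i j) (hg.integrableOn_apply i j)

lemma matInt_sub (hf : HasFiniteMoments I f) (hg : HasFiniteMoments I g) :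
    matInt I (fun x => f x - g x) = matInt I f - matInt I g := by
  ext i j
  exact integral_sub (hf.integrableOn_apply i j) (hg.integrableOn_apply i j)

lemma matInt_mul_const (hf : HasFiniteMoments I f) (C : Matrix (Fin N) (Fin N) ℂ) :
    matInt I (fun x => f x * C) = matInt I f * C := by
  ext i j
  simp only [matInt, Matrix.mul_apply]
  rw [integral_finsetSum _ fun a _ => (hf.integrableOn_apply i a).mul_const _]
  simp_rw [integral_mul_const]

end MatInt

variable {I : Set ℝ} {W : ℝ → Matrix (Fin N) (Fin N) ℂ}

lemma HasFiniteMoments.innerW_integrand (hW : HasFiniteMoments I W) (P Q : MatPoly N) :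
    HasFiniteMoments I (fun x => evalM P x * W x * (evalM Q x)ᴴ) :=
  (hW.evalM_mul P).mul_conjTranspose_evalM Q

lemma innerW_sub_left (hW : HasFiniteMoments I W) (P Q R : MatPoly N) :
    innerW I W (P - Q) R = innerW I W P R - innerW I W Q R := by
  simp only [innerW, evalM_sub, sub_mul]
  exact matInt_sub (hW.innerW_integrand P R) (hW.innerW_integrand Q R)

lemma innerW_add_right (hW : HasFiniteMoments I W) (P Q R : MatPoly N) :
    innerW I W P (Q + R) = innerW I W P Q + innerW I W P R := by
  simp only [innerW, evalM_add, Matrix.conjTranspose_add, mul_add]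
  exact matInt_add (hW.innerW_integrand P Q) (hW.innerW_integrand P R)

lemma innerW_constM_mul_right (hW : HasFiniteMoments I W) (P Q : MatPoly N)
    (C : Matrix (Fin N) (Fin N) ℂ) :
    innerW I W P (constM C * Q) = innerW I W P Q * Cᴴ := by
  simp only [innerW, evalM_mul, evalM_constM, Matrix.conjTranspose_mul, ← mul_assoc]
  exact matInt_mul_const (hW.innerW_integrand P Q) Cᴴ

lemma innerW_sum_right (hW : HasFiniteMoments I W) (P : MatPoly N) {ι : Type*} (s : Finset ι)
    (Q : ι → MatPoly N) : innerW I W P (∑ k ∈ s, Q k) = ∑ k ∈ s, innerW I W P (Q k) := by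
  classical
  induction s using Finset.induction_on with
  | empty => ext i j; simp [innerW, matInt]
  | insert k s hk ih => rw [Finset.sum_insert hk, innerW_add_right hW, ih, Finset.sum_insert hk]

end InnerProduct

section Orthogonality

variable {N : ℕ}

def IsDegLT (Q : MatPoly N) (n : ℕ) : Prop := ∀ k, n ≤ k → coeffM Q k = 0

lemma coeffM_sub (P Q : MatPoly N) (k : ℕ) : coeffM (P - Q) k = coeffM P k - coeffM Q k := by
  ext i j
  simp [coeffM]

lemma coeffM_constM_mul (C : Matrix (Fin N) (Fin N) ℂ) (P : MatPoly N) (k : ℕ) :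
    coeffM (constM C * P) k = C * coeffM P k := by
  ext i j
  simp [coeffM, constM, Matrix.mul_apply, finsetSum_coeff]

lemma IsMonicDeg.isDegLT_sub {P Q : MatPoly N} {n : ℕ} (hP : IsMonicDeg P n)
    (hQ : IsMonicDeg Q n) : IsDegLT (P - Q) n := by
  intro k hk
  rw [coeffM_sub]
  rcases hk.eq_or_lt with rfl | hk
  · rw [hP.1, hQ.1, sub_self]
  · rw [hP.2 k hk, hQ.2 k hk, sub_self]

lemma IsDegLT.eq_zero {Q : MatPoly N} (hQ : IsDegLT Q 0) : Q = 0 := by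
  ext i j k
  simpa [coeffM] using congrFun (congrFun (hQ k k.zero_le) i) j

lemma IsDegLT.exists_eq_sum_constM_mul {P : ℕ → MatPoly N} (hP : ∀ k, IsMonicDeg (P k) k)
    {Q : MatPoly N} {n : ℕ} (hQ : IsDegLT Q n) :
    ∃ C : ℕ → Matrix (Fin N) (Fin N) ℂ, Q = ∑ k ∈ Finset.range n, constM (C k) * P k := by
  induction n generalizing Q with
  | zero => exact ⟨0, by simp [hQ.eq_zero]⟩
  | succ n ih =>
    have hQ' : IsDegLT (Q - constM (coeffM Q n) * P n) n := by
      intro k hk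
      rw [coeffM_sub, coeffM_constM_mul]
      rcases hk.eq_or_lt with rfl | hk
      · rw [(hP _).1, mul_one, sub_self]
      · rw [hQ k hk, (hP n).2 k hk, mul_zero, sub_zero]
    obtain ⟨C, hC⟩ := ih hQ'
    refine ⟨Function.update C n (coeffM Q n), ?_⟩
    rw [Finset.sum_range_succ, Function.update_self,
      Finset.sum_congr rfl fun k hk => by
        rw [Function.update_of_ne (Finset.mem_range.mp hk).ne], ← hC, sub_add_cancel]

variable {I : Set ℝ} {W : ℝ → Matrix (Fin N) (Fin N) ℂ} {P : ℕ → MatPoly N}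

lemma MonicOPS.innerW_eq_zero_of_isDegLT (hP : MonicOPS I W P) (hW : HasFiniteMoments I W)
    {Q : MatPoly N} {n : ℕ} (hQ : IsDegLT Q n) : innerW I W (P n) Q = 0 := by
  obtain ⟨C, rfl⟩ := hQ.exists_eq_sum_constM_mul hP.1
  rw [innerW_sum_right hW]
  refine Finset.sum_eq_zero fun k hk => ?_
  rw [innerW_constM_mul_right hW, hP.2 n k (Finset.mem_range.mp hk).ne', zero_mul]

end Orthogonality

section Positivity

variable {N : ℕ}

lemma ae_eq_zero_of_integral_eq_zero_of_nonneg {α : Type*} [MeasurableSpace α] {μ : Measure α}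
    {f : α → ℂ} (hf : Integrable f μ) (hnn : ∀ᵐ x ∂μ, 0 ≤ f x) (h0 : ∫ x, f x ∂μ = 0) :
    f =ᵐ[μ] 0 := by
  have hre : (fun x => (f x).re) =ᵐ[μ] 0 := by
    refine (integral_eq_zero_iff_of_nonneg_ae ?_ hf.re).mp ?_
    · filter_upwards [hnn] with x hx using (Complex.le_def.mp hx).1
    · simpa [h0] using integral_re hf
  filter_upwards [hnn, hre] with x hnn hre
  rw [← Complex.re_add_im (f x), ← (Complex.le_def.mp hnn).2]
  simpa using hre

lemma Matrix.PosDef.eq_zero_of_diag_mul_mul_conjTranspose {n m : Type*} [Fintype n]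
    {A : Matrix n n ℂ} (hA : A.PosDef) {B : Matrix m n ℂ} (hB : ∀ i, (B * A * Bᴴ) i i = 0) :
    B = 0 := by
  ext i b
  by_contra hib
  have hv : star (B i) ≠ 0 := fun h => hib (by simpa using congrFun h b)
  have := hA.dotProduct_mulVec_pos hv
  have hquad : star (star (B i)) ⬝ᵥ (A *ᵥ star (B i)) = (B * A * Bᴴ) i i := by
    simp only [star_star, dotProduct, Matrix.mulVec, Matrix.mul_apply, Matrix.conjTranspose_apply,
      Pi.star_apply, Finset.mul_sum, Finset.sum_mul, mul_assoc]
    exact Finset.sum_comm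
  rw [hquad, hB i] at this
  exact this.false

lemma eq_zero_of_ae_evalM_eq_zero {I : Set ℝ} (hI : volume I ≠ 0) {D : MatPoly N}
    (h : ∀ᵐ x ∂volume.restrict I, evalM D x = 0) : D = 0 := by
  ext i j : 1
  by_contra hD
  have hroots : {x : ℝ | (D i j).eval (x : ℂ) = 0}.Countable :=
    ((Polynomial.finite_setOfPred_isRoot hD).preimage
      (f := ((↑) : ℝ → ℂ)) Complex.ofReal_injective.injOn).countable
  have hne : ∀ᵐ x : ℝ ∂volume.restrict I, (D i j).eval (x : ℂ) ≠ 0 :=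
    ae_restrict_of_ae (measure_eq_zero_iff_ae_notMem.mp (hroots.measure_zero volume))
  have : (ae (volume.restrict I)).NeBot := ae_neBot.mpr (by rwa [Ne, Measure.restrict_eq_zero])
  obtain ⟨x, hx, hxne⟩ := (h.and hne).exists
  exact hxne (congrFun (congrFun hx i) j)

lemma IsWeight.eq_zero_of_innerW_self_eq_zero {I : Set ℝ} {W : ℝ → Matrix (Fin N) (Fin N) ℂ}
    (hW : IsWeight I W) (hI : volume I ≠ 0) {D : MatPoly N} (h : innerW I W D D = 0) :
    D = 0 := by
  have hdiag : ∀ i, (fun x => (evalM D x * W x * (evalM D x)ᴴ) i i) =ᵐ[volume.restrict I] 0 := by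
    intro i
    refine ae_eq_zero_of_integral_eq_zero_of_nonneg
      ((hW.hasFiniteMoments.innerW_integrand D D).integrableOn_apply i i) ?_
      (congrFun (congrFun h i) i)
    filter_upwards [hW.posdef] with x hx
    exact (hx.posSemidef.mul_mul_conjTranspose_same _).diag_nonneg
  refine eq_zero_of_ae_evalM_eq_zero hI ?_
  filter_upwards [hW.posdef, ae_all_iff.mpr hdiag] with x hx hxdiag
  exact hx.eq_zero_of_diag_mul_mul_conjTranspose hxdiag

lemma MonicOPS.eq_of_isMonicDeg {I : Set ℝ} {W : ℝ → Matrix (Fin N) (Fin N) ℂ}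
    {P : ℕ → MatPoly N} (hP : MonicOPS I W P) (hW : IsWeight I W) (hI : volume I ≠ 0)
    {Q : MatPoly N} {n : ℕ} (hQ : IsMonicDeg Q n)
    (horth : ∀ R, IsDegLT R n → innerW I W Q R = 0) : P n = Q := by
  have hD : IsDegLT (P n - Q) n := (hP.1 n).isDegLT_sub hQ
  refine sub_eq_zero.mp (hW.eq_zero_of_innerW_self_eq_zero hI ?_)
  rw [innerW_sub_left hW.hasFiniteMoments, hP.innerW_eq_zero_of_isDegLT hW.hasFiniteMoments hD,
    horth _ hD, sub_zero]

end Positivity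

section EvenWeight

lemma integral_eq_zero_of_ae_odd {E : Type*} [NormedAddCommGroup E] [NormedSpace ℝ E]
    {f : ℝ → E} (hf : ∀ᵐ x, f (-x) = -f x) : ∫ x, f x = 0 := by
  have h : ∫ x, f x = -∫ x, f x := by
    rw [← integral_neg, ← integral_neg_eq_self f volume]
    exact integral_congr_ae hf
  have h2 : (2 : ℝ) • ∫ x, f x = 0 := by
    rw [two_smul]
    nth_rewrite 2 [h]
    exact add_neg_cancel _
  exact (smul_eq_zero.mp h2).resolve_left two_ne_zero

lemma integral_eq_two_smul_integral_Ioi_of_ae_even {E : Type*} [NormedAddCommGroup E]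
    [NormedSpace ℝ E] {f : ℝ → E} (hf : Integrable f) (heven : ∀ᵐ x, f (-x) = f x) :
    ∫ x, f x = (2 : ℝ) • ∫ x in Ioi 0, f x := by
  have hIic : ∫ x in Iic 0, f x = ∫ x in Ioi 0, f x := by
    rw [← neg_zero, ← integral_comp_neg_Ioi, neg_zero]
    exact integral_congr_ae (ae_restrict_of_ae heven)
  rw [← intervalIntegral.integral_Iic_add_Ioi hf.integrableOn hf.integrableOn, hIic, two_smul]

variable {N : ℕ} {W : ℝ → Matrix (Fin N) (Fin N) ℂ}

lemma UWeight_sq {x : ℝ} (hx : 0 ≤ x) : UWeight W (x ^ 2) = x • W x := by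
  rw [UWeight, Real.sqrt_sq hx]

lemma innerW_XmulM_compSqM_compSqM (hsymm : ∀ᵐ x : ℝ, W x = W (-x)) (P Q : MatPoly N) :
    innerW univ W (XmulM (compSqM P)) (compSqM Q) = 0 := by
  ext i j
  refine setIntegral_univ.trans (integral_eq_zero_of_ae_odd ?_)
  filter_upwards [hsymm] with x hx
  simp [← hx]

lemma innerW_XmulM_compSqM_XmulM_compSqM (hW : HasFiniteMoments univ W)
    (hsymm : ∀ᵐ x : ℝ, W x = W (-x)) (P Q : MatPoly N) :
    innerW univ W (XmulM (compSqM P)) (XmulM (compSqM Q)) = innerW (Ioi 0) (UWeight W) P Q := by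
  ext i j
  set g : ℝ → ℂ := fun x => (evalM P (x ^ 2) * W x * (evalM Q (x ^ 2))ᴴ) i j
  have hint : Integrable fun x => (x * x) • g x := by
    simpa [g, mul_assoc] using
      (hW.innerW_integrand (XmulM (compSqM P)) (XmulM (compSqM Q))).integrableOn_apply i j
  have hlhs : innerW univ W (XmulM (compSqM P)) (XmulM (compSqM Q)) i j
      = ∫ x, (x * x) • g x := by
    simp [innerW, matInt, g, mul_assoc]
  have hrhs : innerW (Ioi 0) (UWeight W) P Q i j = ∫ x in Ioi 0, (2 : ℝ) • ((x * x) • g x) := by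
    rw [innerW, matInt, ← integral_comp_rpow_Ioi_of_pos two_pos]
    refine setIntegral_congr_fun measurableSet_Ioi fun x (hx : 0 < x) => ?_
    rw [show (2 : ℝ) - 1 = 1 by norm_num, Real.rpow_one, Real.rpow_two]
    simp only [UWeight_sq hx.le, Algebra.mul_smul_comm, Algebra.smul_mul_assoc, Matrix.smul_apply,
      Complex.real_smul, Complex.ofReal_mul, Complex.ofReal_ofNat, g]
    ring
  rw [hlhs, hrhs, integral_smul, integral_eq_two_smul_integral_Ioi_of_ae_even hint]
  filter_upwards [hsymm] with x hx
  simp [g, ← hx]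

end EvenWeight

section OddSubsequence

variable {N : ℕ} {W : ℝ → Matrix (Fin N) (Fin N) ℂ}

lemma HasFiniteMoments.uWeight (hW : HasFiniteMoments univ W) :
    HasFiniteMoments (Ioi 0) (UWeight W) := by
  intro n i j
  rw [← integrableOn_Ioi_comp_rpow_iff' _ two_ne_zero]
  refine ((hW (2 * n + 2) i j).mono_set (subset_univ _)).congr_fun (fun x (hx : 0 < x) => ?_)
    measurableSet_Ioi
  rw [show (2 : ℝ) - 1 = 1 by norm_num, Real.rpow_one, Real.rpow_two, UWeight_sq hx.le]
  simp only [Matrix.smul_apply, Complex.real_smul]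
  push_cast
  ring

lemma coeffM_XmulM_compSqM (P : MatPoly N) (k : ℕ) :
    coeffM (XmulM (compSqM P)) k = if Odd k then coeffM P (k / 2) else 0 := by
  ext i j
  split_ifs with hk <;>
    simp [coeffM, XmulM, compSqM_apply, coeff_X_mul_expand_two, hk]

lemma IsMonicDeg.XmulM_compSqM {P : MatPoly N} {m : ℕ} (hP : IsMonicDeg P m) :
    IsMonicDeg (XmulM (compSqM P)) (2 * m + 1) := by
  refine ⟨?_, fun k hk => ?_⟩
  · rw [coeffM_XmulM_compSqM, if_pos (odd_two_mul_add_one m), Nat.mul_add_div two_pos,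
      Nat.div_eq_of_lt one_lt_two, add_zero, hP.1]
  · rw [coeffM_XmulM_compSqM]
    split_ifs
    · exact hP.2 _ (by omega)
    · rfl

lemma IsDegLT.map_oddPart {R : MatPoly N} {m : ℕ} (hR : IsDegLT R (2 * m + 1)) :
    IsDegLT (R.map oddPart) m := by
  intro k hk
  have := hR (2 * k + 1) (by omega)
  ext i j
  simpa [coeffM, coeff_oddPart] using congrFun (congrFun this i) j

lemma MonicOPS.odd_eq_XmulM_compSqM (hW : IsWeight univ W) (hsymm : ∀ᵐ x : ℝ, W x = W (-x))
    {H : ℕ → MatPoly N} (hH : MonicOPS univ W H) {F : ℕ → MatPoly N}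
    (hF : MonicOPS (Ioi 0) (UWeight W) F) (m : ℕ) :
    H (2 * m + 1) = XmulM (compSqM (F m)) := by
  refine hH.eq_of_isMonicDeg hW (by simp) (hF.1 m).XmulM_compSqM fun R hR => ?_
  have hmom := hW.hasFiniteMoments
  rw [← compSqM_map_contract_add_XmulM_compSqM_map_oddPart R, innerW_add_right hmom,
    innerW_XmulM_compSqM_compSqM hsymm, innerW_XmulM_compSqM_XmulM_compSqM hmom hsymm,
    hF.innerW_eq_zero_of_isDegLT hmom.uWeight hR.map_oddPart, zero_add]

end OddSubsequence

section Scalar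

def scalarWeight (w : ℝ → ℝ) : ℝ → Matrix (Fin 1) (Fin 1) ℂ := fun x => w x • 1

def scalarMatPoly (p : ℝ[X]) : MatPoly 1 := p.map (algebraMap ℝ ℂ) • 1

lemma eval_map_algebraMap_ofReal (p : ℝ[X]) (x : ℝ) :
    (p.map (algebraMap ℝ ℂ)).eval (x : ℂ) = ((p.eval x : ℝ) : ℂ) := by
  rw [eval_map_algebraMap, ← Complex.coe_algebraMap, aeval_algebraMap_apply_eq_algebraMap_eval]

lemma innerW_scalarWeight (I : Set ℝ) (w : ℝ → ℝ) (p q : ℝ[X]) :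
    innerW I (scalarWeight w) (scalarMatPoly p) (scalarMatPoly q)
      = ((∫ x in I, p.eval x * q.eval x * w x : ℝ) : ℂ) • 1 := by
  have hentry : ∀ x, (evalM (scalarMatPoly p) x * scalarWeight w x
      * (evalM (scalarMatPoly q) x)ᴴ) 0 0 = ((p.eval x * q.eval x * w x : ℝ) : ℂ) := by
    intro x
    simp only [scalarWeight, scalarMatPoly, evalM_smul_one, eval_map_algebraMap_ofReal]
    simp only [Complex.coe_smul, Algebra.mul_smul_comm, mul_one, conjTranspose_smul, star_trivial,
      conjTranspose_one, Matrix.smul_apply, one_apply_eq, Complex.real_smul, Complex.ofReal_mul]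
    ring
  ext i j
  rw [Subsingleton.elim i 0, Subsingleton.elim j 0, innerW, matInt]
  simp only [hentry, Matrix.smul_apply, Matrix.one_apply_eq, smul_eq_mul, mul_one]
  exact integral_ofReal

lemma coeffM_scalarMatPoly (p : ℝ[X]) (k : ℕ) :
    coeffM (scalarMatPoly p) k = ((p.coeff k : ℝ) : ℂ) • 1 := by
  ext i j
  rw [Subsingleton.elim i 0, Subsingleton.elim j 0]
  simp [coeffM, scalarMatPoly]

lemma ScalarMonicOPS.monicOPS_scalar {I : Set ℝ} {w : ℝ → ℝ} {p : ℕ → ℝ[X]}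
    (hp : ScalarMonicOPS I w p) : MonicOPS I (scalarWeight w) (fun n => scalarMatPoly (p n)) := by
  refine ⟨fun n => ⟨?_, fun k hk => ?_⟩, fun n m hnm => ?_⟩
  · have hlead : (p n).coeff n = 1 := by
      simpa [(hp.1 n).2] using (hp.1 n).1.coeff_natDegree
    simp [coeffM_scalarMatPoly, hlead]
  · rw [coeffM_scalarMatPoly, coeff_eq_zero_of_natDegree_lt ((hp.1 n).2.trans_lt hk)]
    simp
  · simp [innerW_scalarWeight, hp.2 n m hnm]

end Scalar

section HermiteLaguerre

lemma integrable_pow_mul_exp_neg_sq (n : ℕ) :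
    Integrable fun x : ℝ => x ^ n * Real.exp (-x ^ 2) := by
  simpa using integrable_rpow_mul_exp_neg_mul_sq one_pos
    (by linarith [n.cast_nonneg (α := ℝ)] : (-1 : ℝ) < n)

lemma isWeight_scalarWeight_exp_neg_sq :
    IsWeight univ (scalarWeight fun x => Real.exp (-x ^ 2)) := by
  have hmom : HasFiniteMoments univ (scalarWeight fun x => Real.exp (-x ^ 2)) := by
    intro n i j
    refine ((integrable_pow_mul_exp_neg_sq n).ofReal.mul_const
      ((1 : Matrix (Fin 1) (Fin 1) ℂ) i j)).integrableOn.congr_fun (fun x _ => ?_)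
      MeasurableSet.univ
    simp only [Complex.coe_algebraMap, Complex.ofReal_mul, Complex.ofReal_pow, Complex.ofReal_exp,
      Complex.ofReal_neg, scalarWeight, Matrix.smul_apply, Complex.real_smul]
    ring
  exact ⟨hmom.integrableOn_apply, ae_of_all _ fun x => Matrix.PosDef.one.smul (Real.exp_pos _),
    hmom⟩

lemma uWeight_scalarWeight_exp_neg_sq :
    EqOn (UWeight (scalarWeight fun x => Real.exp (-x ^ 2)))
      (scalarWeight fun y => Real.sqrt y * Real.exp (-y)) (Ioi 0) := by
  intro y (hy : 0 < y)
  simp [UWeight, scalarWeight, Real.sq_sqrt hy.le, smul_smul]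

lemma MonicOPS.congr_weight {N : ℕ} {I : Set ℝ} (hI : MeasurableSet I)
    {W W' : ℝ → Matrix (Fin N) (Fin N) ℂ} (hWW' : EqOn W W' I) {P : ℕ → MatPoly N}
    (hP : MonicOPS I W P) : MonicOPS I W' P := by
  refine ⟨hP.1, fun n m hnm => ?_⟩
  rw [← hP.2 n m hnm]
  ext i j
  exact setIntegral_congr_fun hI fun x hx => by simp only [hWW' hx]

lemma ScalarMonicOPS.odd_hermite_eq {h ℓ : ℕ → ℝ[X]}
    (hh : ScalarMonicOPS univ (fun x => Real.exp (-x ^ 2)) h)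
    (hℓ : ScalarMonicOPS (Ioi 0) (fun y => Real.sqrt y * Real.exp (-y)) ℓ) (n : ℕ) :
    (h (2 * n + 1)).map (algebraMap ℝ ℂ) = X * expand ℂ 2 ((ℓ n).map (algebraMap ℝ ℂ)) := by
  have := MonicOPS.odd_eq_XmulM_compSqM isWeight_scalarWeight_exp_neg_sq
    (ae_of_all _ fun x => by simp [scalarWeight]) hh.monicOPS_scalar
    (hℓ.monicOPS_scalar.congr_weight measurableSet_Ioi uWeight_scalarWeight_exp_neg_sq.symm) n
  simpa [scalarMatPoly, XmulM, compSqM_apply] using congrFun (congrFun this 0) 0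

end HermiteLaguerre

theorem stmt13_general {N : ℕ} (W : ℝ → Matrix (Fin N) (Fin N) ℂ)
    (hW : IsWeight Set.univ W)
    (hsymm : ∀ᵐ x : ℝ, W x = W (-x))
    (H : ℕ → MatPoly N) (hH : MonicOPS Set.univ W H)
    (Fp : ℕ → MatPoly N) (hFp : MonicOPS (Set.Ioi 0) (UWeight W) Fp)
    (h : ℕ → Polynomial ℝ)
    (hh : ScalarMonicOPS Set.univ (fun x => Real.exp (-x ^ 2)) h)
    (ℓ : ℕ → Polynomial ℝ)
    (hℓ : ScalarMonicOPS (Set.Ioi 0)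
      (fun y => Real.sqrt y * Real.exp (-y)) ℓ)
    (s : ℕ) (F : ℕ → MatPoly N) (A : ℕ → Matrix (Fin N) (Fin N) ℂ)
    (hV : ∀ n : ℕ,
      applyOp s F (((h n).map (algebraMap ℝ ℂ)) • (1 : MatPoly N))
        = constM (A n) * H n) :
    ∃ (t : ℕ) (G : ℕ → MatPoly N),
      ∀ n : ℕ,
        applyOp t G (((ℓ n).map (algebraMap ℝ ℂ)) • (1 : MatPoly N))
          = constM (A (2 * n + 1)) * Fp n := by
  obtain ⟨G, hG⟩ := exists_map_oddPart_applyOp_X_mul_expand s F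
  refine ⟨s, G, fun n => ?_⟩
  rw [← hG, ← hh.odd_hermite_eq hℓ n, hV, hH.odd_eq_XmulM_compSqM hW hsymm hFp n,
    map_oddPart_constM_mul, map_oddPart_XmulM_compSqM]

/-- Let `W(x) = W(-x)` a.e. with monic orthogonal polynomials `H`,
`U(y) = y^{1/2} W(√y)` with monic orthogonal polynomials `Fp`, `h` the monic scalar
Hermite polynomials (weight `e^{-x²}` on `ℝ`) and `ℓ` the monic scalar Laguerre
polynomials of parameter `1/2` (weight `y^{1/2} e^{-y}` on `(0,∞)`).  If a
differential operator `𝒱 = ∑_{j=0}^s (d^j/dx^j) F_j` and invertible matrices `A_n`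
satisfy `(h_n I) · 𝒱 = A_n H_n` for all `n`, then there is a differential operator
`ℰ̃` with matrix polynomial coefficients with `(ℓ_n I) · ℰ̃ = A_{2n+1} Fp_n` for all
`n`; in particular `U` is a Darboux transformation of `y^{1/2} e^{-y} I`. -/
theorem stmt13 {N : ℕ} (W : ℝ → Matrix (Fin N) (Fin N) ℂ)
    (hW : IsWeight Set.univ W)
    (hsymm : ∀ᵐ x : ℝ, W x = W (-x))
    (H : ℕ → MatPoly N) (hH : MonicOPS Set.univ W H)
    (Fp : ℕ → MatPoly N) (hFp : MonicOPS (Set.Ioi 0) (UWeight W) Fp)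
    (h : ℕ → Polynomial ℝ)
    (hh : ScalarMonicOPS Set.univ (fun x => Real.exp (-x ^ 2)) h)
    (ℓ : ℕ → Polynomial ℝ)
    (hℓ : ScalarMonicOPS (Set.Ioi 0)
      (fun y => Real.sqrt y * Real.exp (-y)) ℓ)
    (s : ℕ) (F : ℕ → MatPoly N) (A : ℕ → Matrix (Fin N) (Fin N) ℂ)
    (hA : ∀ n, IsUnit (A n))
    (hV : ∀ n : ℕ,
      applyOp s F (((h n).map (algebraMap ℝ ℂ)) • (1 : MatPoly N))
        = constM (A n) * H n) :
    ∃ (t : ℕ) (G : ℕ → MatPoly N),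
      ∀ n : ℕ,
        applyOp t G (((ℓ n).map (algebraMap ℝ ℂ)) • (1 : MatPoly N))
          = constM (A (2 * n + 1)) * Fp n :=
  stmt13_general W hW hsymm H hH Fp hFp h hh ℓ hℓ s F A hV
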